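/- arXiv:2110.06394 — 5 statements merged into one kernel-verified Lean document; each statement's English description precedes it below -/
import Mathlib

section
/- If A and B are positive definite d×d matrices with A ⪰ B (i.e., A − B is positive semidefinite), then for any vector x ∈ R^d, sqrt(xᵀAx) ≤ sqrt(xᵀBx) · sqrt(det(A)/det(B)). -/
open Matrix

private lemma real_conjT {d : ℕ} (M : Matrix (Fin d) (Fin d) ℝ) : Mᴴ = Mᵀ := by
  ext i j; simp [conjTranspose_apply]

private lemma aux_eigen_ge_one {d : ℕ} {C : Matrix (Fin d) (Fin d) ℝ} (hC : C.IsHermitian)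
    (h1 : (C - 1).PosSemidef) (i : Fin d) : 1 ≤ hC.eigenvalues i := by
  have h := h1.dotProduct_mulVec_nonneg ⇑(hC.eigenvectorBasis i)
  have hnorm : star ⇑(hC.eigenvectorBasis i) ⬝ᵥ ⇑(hC.eigenvectorBasis i) = 1 := by
    rw [dotProduct_comm, ← EuclideanSpace.inner_eq_star_dotProduct]
    have h2 := hC.eigenvectorBasis.orthonormal.1 i
    rw [@real_inner_self_eq_norm_sq, h2]; norm_num
  have hev := hC.eigenvalues_eq i
  simp only [sub_mulVec, one_mulVec, dotProduct_sub, hnorm, RCLike.re_to_real] at h hev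
  linarith

private lemma aux_key {d : ℕ} {C : Matrix (Fin d) (Fin d) ℝ} (hC : C.IsHermitian)
    (h1 : (C - 1).PosSemidef) (y : Fin d → ℝ) :
    y ⬝ᵥ C *ᵥ y ≤ C.det * (y ⬝ᵥ y) := by
  have hev : ∀ i, 1 ≤ hC.eigenvalues i := aux_eigen_ge_one hC h1
  set U : Matrix (Fin d) (Fin d) ℝ := (hC.eigenvectorUnitary : Matrix (Fin d) (Fin d) ℝ) with hU
  set w : Fin d → ℝ := Uᵀ *ᵥ y with hw
  have hstar : (star U : Matrix (Fin d) (Fin d) ℝ) = Uᵀ := by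
    rw [Matrix.star_eq_conjTranspose, real_conjT]
  have hdiag : diagonal (RCLike.ofReal ∘ hC.eigenvalues) = diagonal hC.eigenvalues := by
    congr 1
  have hyCy : y ⬝ᵥ C *ᵥ y = ∑ i, hC.eigenvalues i * (w i)^2 := by
    conv_lhs => rw [hC.spectral_theorem, Unitary.conjStarAlgAut_apply, hstar, hdiag]
    rw [← mulVec_mulVec, ← mulVec_mulVec, dotProduct_mulVec y U, ← mulVec_transpose, ← hw]
    simp [dotProduct, mulVec_diagonal]
    exact Finset.sum_congr rfl fun i _ => by ring
  have hyy : y ⬝ᵥ y = ∑ i, (w i)^2 := by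
    have hUU : U * Uᵀ = 1 := by
      rw [← hstar]; exact (Matrix.mem_unitaryGroup_iff).mp hC.eigenvectorUnitary.2
    have : w ⬝ᵥ w = y ⬝ᵥ y := by
      rw [hw, dotProduct_mulVec, ← mulVec_transpose, transpose_transpose, mulVec_mulVec, hUU,
        one_mulVec]
    rw [← this]; simp [dotProduct]
    exact Finset.sum_congr rfl fun i _ => (sq (w i)).symm ▸ by ring
  have hdet : C.det = ∏ i, hC.eigenvalues i := by
    have := hC.det_eq_prod_eigenvalues
    simpa using this
  rw [hyCy, hyy, hdet, Finset.mul_sum]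
  apply Finset.sum_le_sum
  intro i _
  have h : hC.eigenvalues i ≤ ∏ j, hC.eigenvalues j := by
    rw [← Finset.prod_erase_mul _ _ (Finset.mem_univ i)]
    have h1le : (1:ℝ) ≤ ∏ j ∈ Finset.univ.erase i, hC.eigenvalues j := by
      calc (1:ℝ) = ∏ _j ∈ Finset.univ.erase i, (1:ℝ) := by simp
      _ ≤ _ := Finset.prod_le_prod (fun j _ => zero_le_one) (fun j _ => hev j)
    nlinarith [hev i]
  exact mul_le_mul_of_nonneg_right h (sq_nonneg _)

/-- If `A ⪰ B ≻ 0` then `‖x‖_A ≤ ‖x‖_B √(det A / det B)`. -/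
theorem norm_le_norm_mul_sqrt_det_ratio (d : ℕ) (A B : Matrix (Fin d) (Fin d) ℝ)
    (hA : A.PosDef) (hB : B.PosDef) (hAB : (A - B).PosSemidef) (x : Fin d → ℝ) :
    Real.sqrt (x ⬝ᵥ A.mulVec x) ≤
      Real.sqrt (x ⬝ᵥ B.mulVec x) * Real.sqrt (A.det / B.det) := by
  obtain ⟨S, hS, hSS⟩ : ∃ S : Matrix (Fin d) (Fin d) ℝ, S.PosSemidef ∧ S * S = B :=
    open scoped MatrixOrder in
    ⟨CFC.sqrt B, (CFC.sqrt_nonneg B).posSemidef, CFC.sqrt_mul_sqrt_self B hB.posSemidef.nonneg⟩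
  have hST : Sᵀ = S := by rw [← real_conjT]; exact hS.1
  have hdetB : 0 < B.det := hB.det_pos
  have hdetSS : S.det * S.det = B.det := by rw [← det_mul, hSS]
  have hdetS_ne : S.det ≠ 0 := by
    intro h0; rw [h0, mul_zero] at hdetSS; exact hdetB.ne' hdetSS.symm
  have hSunit : IsUnit S.det := isUnit_iff_ne_zero.mpr hdetS_ne
  have hSinv : S * S⁻¹ = 1 := mul_nonsing_inv S hSunit
  have hinvS : S⁻¹ * S = 1 := nonsing_inv_mul S hSunit
  have hSinvT : S⁻¹ᵀ = S⁻¹ := by rw [transpose_nonsing_inv, hST]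
  set C : Matrix (Fin d) (Fin d) ℝ := S⁻¹ * A * S⁻¹ with hCdef
  have hCT : Cᵀ = C := by
    rw [hCdef, transpose_mul, transpose_mul, hSinvT]
    have hAT : Aᵀ = A := by rw [← real_conjT]; exact hA.isHermitian
    rw [hAT, mul_assoc]
  have hCH : C.IsHermitian := by rw [IsHermitian, real_conjT, hCT]
  have hC1 : (C - 1).PosSemidef := by
    have heq : C - 1 = S⁻¹ * (A - B) * S⁻¹ := by
      have hB1 : S⁻¹ * B * S⁻¹ = 1 := by
        rw [← hSS, ← mul_assoc, mul_assoc (S⁻¹ * S), hinvS, one_mul, hSinv]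
      rw [hCdef, ← hB1, Matrix.mul_sub, Matrix.sub_mul]
    have h2 := hAB.mul_mul_conjTranspose_same S⁻¹
    rw [real_conjT, hSinvT] at h2
    rwa [heq]
  have key := aux_key hCH hC1 (S *ᵥ x)
  have hAx : (S *ᵥ x) ⬝ᵥ C *ᵥ (S *ᵥ x) = x ⬝ᵥ A *ᵥ x := by
    rw [mulVec_mulVec, dotProduct_mulVec, ← mulVec_transpose, transpose_mul, hST, hCT,
      mulVec_mulVec, dotProduct_comm]
    congr 1
    rw [← mulVec_mulVec, mulVec_mulVec]
    rw [hCdef, mul_assoc, mul_assoc, hinvS, mul_one, ← mul_assoc, hSinv, one_mul]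
  have hBx : (S *ᵥ x) ⬝ᵥ (S *ᵥ x) = x ⬝ᵥ B *ᵥ x := by
    rw [dotProduct_mulVec, ← mulVec_transpose, hST, mulVec_mulVec, hSS, dotProduct_comm]
  have hdetC : C.det = A.det / B.det := by
    rw [hCdef, det_mul, det_mul, det_nonsing_inv, Ring.inverse_eq_inv]
    rw [← hdetSS]
    field_simp
  rw [hAx, hBx, hdetC] at key
  have hratio : 0 ≤ A.det / B.det := le_of_lt (div_pos hA.det_pos hdetB)
  calc Real.sqrt (x ⬝ᵥ A.mulVec x) ≤ Real.sqrt (A.det / B.det * (x ⬝ᵥ B.mulVec x)) :=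
        Real.sqrt_le_sqrt key
    _ = Real.sqrt (x ⬝ᵥ B.mulVec x) * Real.sqrt (A.det / B.det) := by
        rw [Real.sqrt_mul hratio, mul_comm]
end

section
/- Let {x_{h,k}}, (h,k) ∈ [H]×[K], be vectors in R^d with ||x_{h,k}||_2 ≤ L, and define U_{h,k} = λI + Σ_{κ<k} Σ_{i=1}^H x_{i,κ} x_{i,κ}ᵀ + Σ_{i<h} x_{i,k} x_{i,k}ᵀ for λ > 0. Then the number of pairs (h,k) with det(U_{h,k}) ≥ 2·det(U_{1,k}) is at most 2Hd·log(1 + KHL²/λ). -/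
open Matrix
open scoped RealInnerProductSpace

variable {n : Type*} [Fintype n] [DecidableEq n]

lemma BDC.psd_det_nonneg {N : Matrix n n ℝ} (h : N.PosSemidef) : 0 ≤ N.det := by
  rw [h.isHermitian.det_eq_prod_eigenvalues]
  exact Finset.prod_nonneg fun i _ => by simpa using h.eigenvalues_nonneg i

lemma BDC.eig_ge {N : Matrix n n ℝ} (hN : N.IsHermitian) {c : ℝ}
    (h : (N - c • 1).PosSemidef) (i : n) : c ≤ hN.eigenvalues i := by
  have key := h.dotProduct_mulVec_nonneg (⇑(hN.eigenvectorBasis i))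
  have hvv : (⇑(hN.eigenvectorBasis i) : n → ℝ) ⬝ᵥ ⇑(hN.eigenvectorBasis i) = 1 := by
    have h1 : ‖hN.eigenvectorBasis i‖ = 1 := hN.eigenvectorBasis.orthonormal.1 i
    have h2 : (inner ℝ (hN.eigenvectorBasis i) (hN.eigenvectorBasis i) : ℝ) = 1 := by
      rw [real_inner_self_eq_norm_mul_norm, h1, one_mul]
    rw [← h2, PiLp.inner_apply]; simp [dotProduct, sq]
  have hmul : N *ᵥ ⇑(hN.eigenvectorBasis i) = hN.eigenvalues i • ⇑(hN.eigenvectorBasis i) :=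
    hN.mulVec_eigenvectorBasis i
  rw [sub_mulVec, dotProduct_sub, hmul, smul_mulVec, one_mulVec, dotProduct_smul,
    dotProduct_smul, star_trivial, hvv] at key
  simp only [smul_eq_mul, mul_one] at key
  linarith

lemma BDC.one_le_det_one_add {M : Matrix n n ℝ} (hM : M.PosSemidef) : 1 ≤ (1 + M).det := by
  have hH : (1 + M).IsHermitian := isHermitian_one.add hM.isHermitian
  have h1 : ((1 + M) - (1:ℝ) • 1).PosSemidef := by simpa using hM
  rw [hH.det_eq_prod_eigenvalues]
  calc (1:ℝ) = ∏ _i : n, 1 := by simp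
  _ ≤ _ := Finset.prod_le_prod (by simp) (fun i _ => by
      simpa using BDC.eig_ge hH h1 i)

lemma BDC.det_mono {A C : Matrix n n ℝ} (hA : A.PosDef) (hC : C.PosSemidef) :
    A.det ≤ (A + C).det := by
  open scoped MatrixOrder in set S := CFC.sqrt A with hSdef
  have hS : S.PosSemidef := open scoped MatrixOrder in nonneg_iff_posSemidef.mp (CFC.sqrt_nonneg A)
  have hSS : S * S = A := open scoped MatrixOrder in
    CFC.sqrt_mul_sqrt_self A (nonneg_iff_posSemidef.mpr hA.posSemidef)
  have hdet2 : S.det * S.det = A.det := by rw [← det_mul, hSS]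
  have hdetS : 0 < S.det := by
    have h0 := BDC.psd_det_nonneg hS
    nlinarith [hA.det_pos]
  have hUnit : IsUnit S.det := hdetS.ne'.isUnit
  have hinv1 : S * S⁻¹ = 1 := mul_nonsing_inv S hUnit
  have hinv2 : S⁻¹ * S = 1 := nonsing_inv_mul S hUnit
  have hSinvH : S⁻¹ᴴ = S⁻¹ := by rw [conjTranspose_nonsing_inv, hS.isHermitian]
  have hM : (S⁻¹ * C * S⁻¹).PosSemidef := by
    have := hC.conjTranspose_mul_mul_same (B := S⁻¹)
    rwa [hSinvH] at this
  have key : A + C = S * (1 + (S⁻¹ * C * S⁻¹)) * S := by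
    rw [mul_add, add_mul, mul_one, hSS]
    congr 1
    symm
    calc S * (S⁻¹ * C * S⁻¹) * S
        = S * (S⁻¹ * (C * (S⁻¹ * S))) := by simp only [Matrix.mul_assoc]
      _ = C := by rw [hinv2, mul_one, ← Matrix.mul_assoc, hinv1, one_mul]
  rw [key, det_mul, det_mul]
  have h1 := BDC.one_le_det_one_add hM
  nlinarith [hA.det_pos]

lemma BDC.posdef_smul_one {lam : ℝ} (hlam : 0 < lam) :
    ((lam • 1 : Matrix n n ℝ)).PosDef := by
  rw [smul_one_eq_diagonal]
  exact .diagonal fun _ => hlam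

lemma BDC.psd_vecMulVec (y : n → ℝ) : (vecMulVec y y).PosSemidef := by
  refine posSemidef_iff_dotProduct_mulVec.mpr ⟨?_, ?_⟩
  · ext i j
    simp [conjTranspose_apply, vecMulVec_apply, mul_comm]
  · intro v
    have hmv : vecMulVec y y *ᵥ v = (y ⬝ᵥ v) • y := by
      ext i
      simp [mulVec, vecMulVec_apply, dotProduct, Finset.mul_sum, mul_assoc, mul_comm, mul_left_comm]
    rw [hmv, dotProduct_smul, star_trivial]
    have : v ⬝ᵥ y = y ⬝ᵥ v := dotProduct_comm v y
    rw [smul_eq_mul, this]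
    exact mul_self_nonneg _

lemma BDC.psd_smul_one_sub_outer {y : n → ℝ} {c : ℝ} (h : ∑ i, y i ^ 2 ≤ c) :
    ((c • 1 : Matrix n n ℝ) - vecMulVec y y).PosSemidef := by
  refine posSemidef_iff_dotProduct_mulVec.mpr ⟨?_, ?_⟩
  · have h1 : ((c • 1 : Matrix n n ℝ)).IsHermitian := by
      rw [smul_one_eq_diagonal]; exact isHermitian_diagonal _
    exact h1.sub (BDC.psd_vecMulVec y).isHermitian
  · intro v
    have hmv : vecMulVec y y *ᵥ v = (y ⬝ᵥ v) • y := by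
      ext i
      simp [mulVec, vecMulVec_apply, dotProduct, Finset.mul_sum, mul_assoc, mul_comm, mul_left_comm]
    rw [star_trivial, sub_mulVec, dotProduct_sub, hmv, smul_mulVec, one_mulVec,
      dotProduct_smul, dotProduct_smul, smul_eq_mul, smul_eq_mul, dotProduct_comm v y]
    have hcs : (y ⬝ᵥ v) * (y ⬝ᵥ v) ≤ c * (v ⬝ᵥ v) := by
      have := Finset.sum_mul_sq_le_sq_mul_sq Finset.univ y v
      have hvv : v ⬝ᵥ v = ∑ i, v i ^ 2 := by simp [dotProduct, sq]
      have hyv : (y ⬝ᵥ v) * (y ⬝ᵥ v) = (∑ i, y i * v i) ^ 2 := by simp [dotProduct, sq]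
      have hv2 : 0 ≤ ∑ i, v i ^ 2 := Finset.sum_nonneg fun i _ => sq_nonneg _
      rw [hyv, hvv]
      calc (∑ i, y i * v i) ^ 2 ≤ (∑ i, y i ^ 2) * ∑ i, v i ^ 2 := this
        _ ≤ c * ∑ i, v i ^ 2 := by apply mul_le_mul_of_nonneg_right h hv2
    linarith

lemma BDC.psd_sum {ι : Type*} (s : Finset ι) (f : ι → Matrix n n ℝ)
    (h : ∀ i ∈ s, (f i).PosSemidef) : (∑ i ∈ s, f i).PosSemidef :=
  Finset.sum_induction f _ (fun _ _ ha hb => ha.add hb) .zero h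

lemma BDC.chain (g : ℕ → ℝ) (S : Finset ℕ) (hmono : ∀ m, g m ≤ g (m + 1))
    (hdouble : ∀ m ∈ S, 2 * g m ≤ g (m + 1)) (hpos : 0 < g 0) :
    ∀ N, 2 ^ (S ∩ Finset.range N).card * g 0 ≤ g N := by
  intro N
  induction N with
  | zero => simp
  | succ N ih =>
    by_cases hN : N ∈ S
    · have hnotmem : N ∉ S ∩ Finset.range N := by simp
      rw [Finset.range_add_one, Finset.inter_insert_of_mem hN,
        Finset.card_insert_of_notMem hnotmem, pow_succ]
      nlinarith [ih, hdouble N hN, hmono N]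
    · rw [Finset.range_add_one, Finset.inter_insert_of_notMem hN]
      exact ih.trans (hmono N)


/-- Batched elliptical potential: the number of pairs `(h,k)` with
`det U_{h,k} ≥ 2 det U_{1,k}` is at most `2 H d log(1 + K H L² / λ)`. -/
theorem batched_det_doubling_count (H K d : ℕ) (hH : 0 < H) (hK : 0 < K) (hd : 0 < d)
    (lam L : ℝ) (hlam : 0 < lam) (hL : 0 < L)
    (x : Fin H → Fin K → Fin d → ℝ)
    (hx : ∀ h k, Real.sqrt (∑ i, x h k i ^ 2) ≤ L) :
    let U : Fin H → Fin K → Matrix (Fin d) (Fin d) ℝ := fun h k =>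
      lam • 1 +
        (∑ κ ∈ Finset.univ.filter (fun κ => κ < k), ∑ i : Fin H, vecMulVec (x i κ) (x i κ)) +
        ∑ i ∈ Finset.univ.filter (fun i => i < h), vecMulVec (x i k) (x i k)
    (({p : Fin H × Fin K | 2 * (U ⟨0, hH⟩ p.2).det ≤ (U p.1 p.2).det} : Set _).ncard : ℝ) ≤
      2 * H * d * Real.log (1 + K * H * L ^ 2 / lam) := by
  classical
  intro U
  have hUdef : U = fun (h : Fin H) (k : Fin K) =>
      lam • 1 +
        (∑ κ ∈ Finset.univ.filter (fun κ => κ < k), ∑ i : Fin H, vecMulVec (x i κ) (x i κ)) +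
        ∑ i ∈ Finset.univ.filter (fun i => i < h), vecMulVec (x i k) (x i k) := rfl
  set o : Fin H := ⟨0, hH⟩ with ho
  -- squared norm bound
  have hL2 : ∀ i k, ∑ j, x i k j ^ 2 ≤ L ^ 2 := by
    intro i k
    have h0 : 0 ≤ ∑ j, x i k j ^ 2 := Finset.sum_nonneg fun j _ => sq_nonneg _
    nlinarith [hx i k, Real.sq_sqrt h0, Real.sqrt_nonneg (∑ j, x i k j ^ 2)]
  set W : ℕ → Matrix (Fin d) (Fin d) ℝ := fun m =>
    lam • 1 + ∑ κ ∈ Finset.univ.filter (fun κ : Fin K => (κ : ℕ) < m),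
      ∑ i : Fin H, vecMulVec (x i κ) (x i κ) with hW
  have hWpos : ∀ m, (W m).PosDef := fun m =>
    (BDC.posdef_smul_one hlam).add_posSemidef
      (BDC.psd_sum _ _ fun κ _ => BDC.psd_sum _ _ fun i _ => BDC.psd_vecMulVec _)
  have hdet0 : (W 0).det = lam ^ d := by
    have h0 : W 0 = lam • 1 := by
      rw [hW]
      have : Finset.univ.filter (fun κ : Fin K => (κ : ℕ) < 0) = ∅ :=
        Finset.filter_false_of_mem fun κ _ => by omega
      simp [this]
    rw [h0, det_smul, det_one, mul_one, Fintype.card_fin]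
  have hfilter0 : Finset.univ.filter (fun i : Fin H => i < o) = ∅ :=
    Finset.filter_false_of_mem fun i _ => by simp [ho, Fin.lt_def]
  have hfiltercast : ∀ k : Fin K, Finset.univ.filter (fun κ : Fin K => κ < k)
      = Finset.univ.filter (fun κ : Fin K => (κ : ℕ) < (k : ℕ)) := by
    intro k
    apply Finset.filter_congr
    intro κ _
    simp only [Fin.lt_def]
  have hUo : ∀ k : Fin K, U o k = W (k : ℕ) := by
    intro k
    rw [hUdef, hW]
    beta_reduce
    rw [hfilter0, Finset.sum_empty, add_zero, hfiltercast k]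
  -- successor decomposition of W
  have hsub : ∀ m, (Finset.univ.filter (fun κ : Fin K => (κ:ℕ) < m))
      ⊆ (Finset.univ.filter (fun κ : Fin K => (κ:ℕ) < m+1)) := by
    intro m κ hκ
    simp only [Finset.mem_filter, Finset.mem_univ, true_and] at *
    omega
  have hWsucc : ∀ m, W (m+1) = W m +
      ∑ κ ∈ (Finset.univ.filter (fun κ : Fin K => (κ:ℕ) < m+1))
        \ (Finset.univ.filter (fun κ : Fin K => (κ:ℕ) < m)),
        ∑ i : Fin H, vecMulVec (x i κ) (x i κ) := by
    intro m
    rw [hW]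
    beta_reduce
    rw [← Finset.sum_sdiff (hsub m) (f := fun κ => ∑ i : Fin H, vecMulVec (x i κ) (x i κ))]
    abel
  have hmono : ∀ m, (W m).det ≤ (W (m+1)).det := by
    intro m
    rw [hWsucc m]
    exact BDC.det_mono (hWpos m)
      (BDC.psd_sum _ _ fun κ _ => BDC.psd_sum _ _ fun i _ => BDC.psd_vecMulVec _)
  -- key step : det (U h k) ≤ det (W (k+1))
  have hkey : ∀ (h : Fin H) (k : Fin K), (U h k).det ≤ (W ((k:ℕ)+1)).det := by
    intro h k
    have hdiff : (Finset.univ.filter (fun κ : Fin K => (κ:ℕ) < (k:ℕ)+1))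
        \ (Finset.univ.filter (fun κ : Fin K => (κ:ℕ) < (k:ℕ))) = {k} := by
      ext κ
      simp only [Finset.mem_sdiff, Finset.mem_filter, Finset.mem_univ, true_and,
        Finset.mem_singleton]
      constructor
      · rintro ⟨h1, h2⟩
        exact Fin.ext (by omega)
      · rintro rfl; omega
    have hWk : W ((k:ℕ)+1) = U h k +
        ∑ i ∈ Finset.univ \ Finset.univ.filter (fun i : Fin H => i < h),
          vecMulVec (x i k) (x i k) := by
      rw [hWsucc (k:ℕ), hdiff, Finset.sum_singleton, hUdef, hW]
      beta_reduce
      rw [hfiltercast k]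
      rw [← Finset.sum_sdiff (Finset.filter_subset (fun i : Fin H => i < h) Finset.univ)
        (f := fun i => vecMulVec (x i k) (x i k))]
      abel
    have hUpos : (U h k).PosDef := by
      rw [hUdef]
      exact ((BDC.posdef_smul_one hlam).add_posSemidef
        (BDC.psd_sum _ _ fun κ _ => BDC.psd_sum _ _ fun i _ => BDC.psd_vecMulVec _)).add_posSemidef
        (BDC.psd_sum _ _ fun i _ => BDC.psd_vecMulVec _)
    rw [hWk]
    exact BDC.det_mono hUpos (BDC.psd_sum _ _ fun i _ => BDC.psd_vecMulVec _)
  -- upper bound on det (W K)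
  have hupper : (W K).det ≤ (lam + (K:ℝ) * H * L^2)^d := by
    have hfull : Finset.univ.filter (fun κ : Fin K => (κ:ℕ) < K) = Finset.univ := by
      apply Finset.filter_true_of_mem
      intro κ _; exact κ.is_lt
    have hconst : (∑ _κ : Fin K, ∑ _i : Fin H, (L^2 • (1 : Matrix (Fin d) (Fin d) ℝ)))
        = ((K:ℝ) * H * L^2) • 1 := by
      rw [Finset.sum_const, Finset.sum_const, Finset.card_univ, Finset.card_univ,
        Fintype.card_fin, Fintype.card_fin, smul_smul, ← Nat.cast_smul_eq_nsmul ℝ, smul_smul]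
      congr 1
      push_cast; ring
    have hCpsd : (((K:ℝ) * H * L^2) • 1
        - ∑ κ : Fin K, ∑ i : Fin H, vecMulVec (x i κ) (x i κ)).PosSemidef := by
      rw [← hconst, ← Finset.sum_sub_distrib]
      apply BDC.psd_sum
      intro κ _
      rw [← Finset.sum_sub_distrib]
      apply BDC.psd_sum
      intro i _
      exact BDC.psd_smul_one_sub_outer (hL2 i κ)
    have h1 : W K + (((K:ℝ) * H * L^2) • 1
        - ∑ κ : Fin K, ∑ i : Fin H, vecMulVec (x i κ) (x i κ))
        = (lam + (K:ℝ) * H * L^2) • (1 : Matrix (Fin d) (Fin d) ℝ) := by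
      rw [hW]
      beta_reduce
      rw [hfull, add_smul]
      abel
    have h2 := BDC.det_mono (hWpos K) hCpsd
    rw [h1] at h2
    calc (W K).det ≤ ((lam + (K:ℝ) * H * L^2) • (1 : Matrix (Fin d) (Fin d) ℝ)).det := h2
      _ = (lam + (K:ℝ) * H * L^2)^d := by rw [det_smul, det_one, mul_one, Fintype.card_fin]
  -- doubling episodes
  set T : Finset (Fin K) :=
    Finset.univ.filter (fun k => ∃ h, 2 * (U o k).det ≤ (U h k).det) with hT
  have hdoubleW : ∀ m ∈ T.image Fin.val, 2 * (W m).det ≤ (W (m+1)).det := by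
    intro m hm
    obtain ⟨k, hk, rfl⟩ := Finset.mem_image.mp hm
    obtain ⟨h, hkh⟩ := (Finset.mem_filter.mp hk).2
    have h1 := hkey h k
    rw [hUo k] at hkh
    linarith
  have hchain := BDC.chain (fun m => (W m).det) (T.image Fin.val) hmono hdoubleW
    (by simpa [hdet0] using pow_pos hlam d) K
  have hScard : ((T.image Fin.val) ∩ Finset.range K).card = T.card := by
    rw [Finset.inter_eq_left.mpr, Finset.card_image_of_injective _ Fin.val_injective]
    intro m hm
    obtain ⟨k, _, rfl⟩ := Finset.mem_image.mp hm
    simp [Finset.mem_range, k.is_lt]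
  rw [hScard] at hchain
  simp only [hdet0] at hchain
  set t := T.card with hTc
  -- numeric conclusion
  have hb : (0:ℝ) ≤ (K:ℝ) * H * L^2 := by positivity
  have hpow : (2:ℝ)^t * lam^d ≤ (lam + (K:ℝ) * H * L^2)^d := le_trans hchain hupper
  have hsplit : (lam + (K:ℝ) * H * L^2)^d = lam^d * (1 + (K:ℝ) * H * L^2/lam)^d := by
    rw [← mul_pow]
    congr 1
    field_simp
  have h2t : (2:ℝ)^t ≤ (1 + (K:ℝ) * H * L^2/lam)^d := by
    have hlp : 0 < lam^d := pow_pos hlam d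
    rw [hsplit] at hpow
    have := (mul_le_mul_iff_right₀ hlp).mpr (le_refl ((1 + (K:ℝ) * H * L^2/lam)^d))
    nlinarith
  have hlog : (t:ℝ) * Real.log 2 ≤ (d:ℝ) * Real.log (1 + (K:ℝ) * H * L^2/lam) := by
    have hlt := Real.log_le_log (by positivity) h2t
    rwa [Real.log_pow, Real.log_pow] at hlt
  have hlog2 : (1:ℝ)/2 ≤ Real.log 2 := by
    have := Real.log_two_gt_d9; linarith
  have ht : (t:ℝ) ≤ 2 * d * Real.log (1 + (K:ℝ) * H * L^2/lam) := by
    have htn : (0:ℝ) ≤ (t:ℝ) := Nat.cast_nonneg t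
    nlinarith
  -- counting pairs
  set P : Finset (Fin H × Fin K) :=
    Finset.univ.filter (fun p => 2 * (U o p.2).det ≤ (U p.1 p.2).det) with hP
  have hset : ({p : Fin H × Fin K | 2 * (U o p.2).det ≤ (U p.1 p.2).det} : Set _) = ↑P := by
    ext p; simp [hP]
  have hcount : P.card ≤ H * t := by
    have hsubP : P ⊆ Finset.univ ×ˢ T := by
      intro p hp
      rw [Finset.mem_product]
      refine ⟨Finset.mem_univ _, ?_⟩
      rw [hT, Finset.mem_filter]
      exact ⟨Finset.mem_univ _, ⟨p.1, (Finset.mem_filter.mp hp).2⟩⟩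
    calc P.card ≤ (Finset.univ ×ˢ T).card := Finset.card_le_card hsubP
      _ = H * t := by rw [Finset.card_product, Finset.card_univ, Fintype.card_fin]
  rw [hset, Set.ncard_coe_finset]
  have hlognn : 0 ≤ Real.log (1 + (K:ℝ) * H * L^2/lam) := by
    apply Real.log_nonneg
    have : 0 ≤ (K:ℝ) * H * L^2/lam := by positivity
    linarith
  calc (P.card : ℝ) ≤ ((H * t : ℕ) : ℝ) := by exact_mod_cast hcount
    _ = (H:ℝ) * t := by push_cast; ring
    _ ≤ (H:ℝ) * (2 * d * Real.log (1 + (K:ℝ) * H * L^2/lam)) := by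
        apply mul_le_mul_of_nonneg_left ht (by positivity)
    _ = 2 * H * d * Real.log (1 + (K:ℝ) * H * L^2 / lam) := by ring
end

section
/- Let x_1, ..., x_T be vectors in R^d with ||x_t||_2 ≤ L for all t, and define U_t = λI + Σ_{τ<t} x_τ x_τᵀ with λ > 0. Then Σ_{t=1}^T min{1, x_tᵀ U_t^{-1} x_t} ≤ 2d·log((dλ + TL²)/(dλ)). -/
open Matrix

section Aux
open Finset

lemma min_le_two_log' {u : ℝ} (hu : 0 ≤ u) : min 1 u ≤ 2 * Real.log (1 + u) := by
  have h1 : (0:ℝ) < 1 + u := by linarith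
  have hlog : u / (1 + u) ≤ Real.log (1 + u) := by
    have h := Real.log_le_sub_one_of_pos (x := 1/(1+u)) (by positivity)
    rw [Real.log_div one_ne_zero h1.ne', Real.log_one] at h
    have h2 : (1:ℝ)/(1+u) - 1 = -(u/(1+u)) := by field_simp; ring
    linarith
  have key : min 1 u ≤ 2 * (u / (1 + u)) := by
    rcases le_total u 1 with h | h
    · rw [min_eq_right h]
      have he : 2 * (u/(1+u)) - u = u*(1-u)/(1+u) := by field_simp; ring
      have : 0 ≤ u*(1-u)/(1+u) := div_nonneg (mul_nonneg hu (by linarith)) h1.le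
      linarith
    · rw [min_eq_left h]
      have : (1:ℝ)/2 ≤ u/(1+u) := by rw [div_le_div_iff₀ (by norm_num) h1]; linarith
      linarith
  linarith

lemma trace_eq_sum_eigs {d : ℕ} {A : Matrix (Fin d) (Fin d) ℝ} (hH : A.IsHermitian) :
    A.trace = ∑ i, hH.eigenvalues i := by
  nth_rw 1 [hH.spectral_theorem]
  rw [Unitary.conjStarAlgAut_apply, Matrix.trace_mul_cycle, (Matrix.mem_unitaryGroup_iff').mp hH.eigenvectorUnitary.2]
  simp [Matrix.trace_diagonal]

lemma det_le_trace_div_pow {d : ℕ} (hd : 0 < d) {A : Matrix (Fin d) (Fin d) ℝ}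
    (hA : A.PosSemidef) : A.det ≤ (A.trace / d) ^ d := by
  have hH := hA.1
  have hev : ∀ i, 0 ≤ hH.eigenvalues i := hA.eigenvalues_nonneg
  have hdet : A.det = ∏ i, hH.eigenvalues i := by simpa using hH.det_eq_prod_eigenvalues
  have htr : A.trace = ∑ i, hH.eigenvalues i := trace_eq_sum_eigs hH
  have hd0 : (d:ℝ) ≠ 0 := Nat.cast_ne_zero.mpr hd.ne'
  have hw : ∑ _i : Fin d, (1/(d:ℝ)) = 1 := by
    rw [Finset.sum_const, Finset.card_univ, Fintype.card_fin, nsmul_eq_mul]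
    field_simp
  have amgm := Real.geom_mean_le_arith_mean_weighted Finset.univ (fun _ => 1/(d:ℝ))
      hH.eigenvalues (fun i _ => by positivity) hw (fun i _ => hev i)
  -- amgm : ∏ i, eig i ^ (1/d) ≤ ∑ i, (1/d) * eig i
  have hprod : (∏ i, hH.eigenvalues i ^ ((1:ℝ)/d)) = (∏ i, hH.eigenvalues i) ^ ((1:ℝ)/d) :=
    Real.finset_prod_rpow Finset.univ _ (fun i _ => hev i) _
  have hsum : (∑ i, (1/(d:ℝ)) * hH.eigenvalues i) = A.trace / d := by
    rw [← Finset.mul_sum, htr]; ring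
  have hP : (0:ℝ) ≤ ∏ i, hH.eigenvalues i := Finset.prod_nonneg fun i _ => hev i
  have hle : (∏ i, hH.eigenvalues i) ^ ((1:ℝ)/d) ≤ A.trace / d := by
    rw [← hprod]; rw [hsum] at amgm; exact amgm
  have hback : ((∏ i, hH.eigenvalues i) ^ ((1:ℝ)/d)) ^ d = ∏ i, hH.eigenvalues i := by
    rw [← Real.rpow_natCast (_ ^ ((1:ℝ)/d)) d, ← Real.rpow_mul hP]
    rw [one_div, inv_mul_cancel₀ hd0, Real.rpow_one]
  calc A.det = ((∏ i, hH.eigenvalues i) ^ ((1:ℝ)/d)) ^ d := by rw [hback, hdet]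
    _ ≤ (A.trace / d) ^ d := pow_le_pow_left₀ (Real.rpow_nonneg hP _) hle d

lemma vecMulVec_posSemidef {d : ℕ} (v : Fin d → ℝ) : (vecMulVec v v).PosSemidef := by
  have h := Matrix.posSemidef_conjTranspose_mul_self (replicateRow (Fin 1) v)
  simp [conjTranspose_replicateRow] at h
  convert h using 1
  exact vecMulVec_eq (Fin 1) _ _

end Aux

/-- Elliptical potential lemma:
`∑_t min{1, xₜᵀ Uₜ⁻¹ xₜ} ≤ 2 d log((dλ + T L²)/(dλ))`. -/
theorem elliptical_potential (d T : ℕ) (hd : 0 < d) (hT : 0 < T)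
    (lam L : ℝ) (hlam : 0 < lam) (hL : 0 < L)
    (x : Fin T → Fin d → ℝ) (hx : ∀ t, Real.sqrt (∑ i, x t i ^ 2) ≤ L) :
    (∑ t : Fin T,
        min 1 (x t ⬝ᵥ
          ((lam • 1 + ∑ τ ∈ Finset.univ.filter (fun τ => τ < t),
              vecMulVec (x τ) (x τ) : Matrix (Fin d) (Fin d) ℝ))⁻¹.mulVec (x t))) ≤
      2 * d * Real.log ((d * lam + T * L ^ 2) / (d * lam)) := by
  classical
  set y : ℕ → Fin d → ℝ := fun n => if h : n < T then x ⟨n, h⟩ else 0 with hy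
  set U : ℕ → Matrix (Fin d) (Fin d) ℝ :=
    fun n => lam • 1 + ∑ τ ∈ Finset.range n, vecMulVec (y τ) (y τ) with hU
  -- positive definiteness
  have hPSD : ∀ n, (∑ τ ∈ Finset.range n, vecMulVec (y τ) (y τ)).PosSemidef := by
    intro n
    induction n with
    | zero => simpa using (Matrix.PosSemidef.zero (n := Fin d) (R := ℝ))
    | succ n ih =>
        rw [Finset.sum_range_succ]
        exact ih.add (vecMulVec_posSemidef _)
  have hUpos : ∀ n, (U n).PosDef := by
    intro n
    have h1 : ((lam • 1 : Matrix (Fin d) (Fin d) ℝ)).PosDef := by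
      rw [smul_one_eq_diagonal]
      exact posDef_diagonal_iff.mpr fun _ => hlam
    exact h1.add_posSemidef (hPSD n)
  -- quadratic forms
  set s : ℕ → ℝ := fun n => y n ⬝ᵥ (U n)⁻¹.mulVec (y n) with hs
  have hs0 : ∀ n, 0 ≤ s n := by
    intro n
    have := ((hUpos n).inv).posSemidef.re_dotProduct_nonneg (y n)
    simpa using this
  -- determinant recursion
  have hstep : ∀ n, (U (n+1)).det = (U n).det * (1 + s n) := by
    intro n
    have hBdet : IsUnit (U n).det := (hUpos n).det_pos.ne'.isUnit
    have hsplit : U (n+1) = U n + replicateCol (Fin 1) (y n) * replicateRow (Fin 1) (y n) := by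
      rw [hU]
      simp only [Finset.sum_range_succ]
      rw [add_assoc]
      congr 2
      exact vecMulVec_eq (Fin 1) _ _
    have hv : U n *ᵥ ((U n)⁻¹ *ᵥ y n) = y n := by
      rw [Matrix.mulVec_mulVec, Matrix.mul_nonsing_inv _ hBdet, Matrix.one_mulVec]
    have hfact : U (n+1) = U n * (1 + replicateCol (Fin 1) ((U n)⁻¹ *ᵥ y n) * replicateRow (Fin 1) (y n)) := by
      rw [Matrix.mul_add, Matrix.mul_one, ← Matrix.mul_assoc, ← Matrix.replicateCol_mulVec, hv, hsplit]
    rw [hfact, det_mul]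
    erw [det_one_add_replicateCol_mul_replicateRow]
  -- telescoping
  have htel : ∀ n, (U n).det = lam ^ d * ∏ t ∈ Finset.range n, (1 + s t) := by
    intro n
    induction n with
    | zero =>
        simp [hU, smul_one_eq_diagonal, Matrix.det_diagonal]
    | succ n ih =>
        rw [hstep n, ih, Finset.prod_range_succ]; ring
  -- rewrite LHS
  have hmat : ∀ t : Fin T,
      (lam • 1 + ∑ τ ∈ Finset.univ.filter (fun τ => τ < t),
          vecMulVec (x τ) (x τ) : Matrix (Fin d) (Fin d) ℝ) = U (t : ℕ) := by
    intro t
    rw [hU]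
    congr 1
    refine Finset.sum_bij' (fun (τ : Fin T) _ => (τ : ℕ))
      (fun j hj => ⟨j, lt_trans (Finset.mem_range.mp hj) t.isLt⟩) ?_ ?_ ?_ ?_ ?_
    · intro a ha
      simp only [Finset.mem_filter, Finset.mem_univ, true_and] at ha
      exact Finset.mem_range.mpr ha
    · intro a ha
      simp only [Finset.mem_filter, Finset.mem_univ, true_and]
      exact Fin.lt_iff_val_lt_val.mpr (Finset.mem_range.mp ha)
    · intro a ha; rfl
    · intro a ha; rfl
    · intro a ha
      simp only [hy]
      rw [dif_pos]
  have hxy : ∀ t : Fin T, x t = y (t : ℕ) := by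
    intro t
    simp only [hy]
    rw [dif_pos t.isLt]
  have hLHS : (∑ t : Fin T,
      min 1 (x t ⬝ᵥ
        ((lam • 1 + ∑ τ ∈ Finset.univ.filter (fun τ => τ < t),
            vecMulVec (x τ) (x τ) : Matrix (Fin d) (Fin d) ℝ))⁻¹.mulVec (x t)))
      = ∑ n ∈ Finset.range T, min 1 (s n) := by
    rw [← Fin.sum_univ_eq_sum_range (fun n => min 1 (s n)) T]
    refine Finset.sum_congr rfl fun t _ => ?_
    rw [hmat t, hxy t]
  rw [hLHS]
  -- bound each term by logs
  have h1s : ∀ n, (0:ℝ) < 1 + s n := fun n => by have := hs0 n; linarith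
  have hsum_le : (∑ n ∈ Finset.range T, min 1 (s n))
      ≤ 2 * Real.log (∏ n ∈ Finset.range T, (1 + s n)) := by
    rw [Real.log_prod (fun n _ => (h1s n).ne'), Finset.mul_sum]
    exact Finset.sum_le_sum fun n _ => min_le_two_log' (hs0 n)
  refine hsum_le.trans ?_
  -- trace bound
  have hquad : ∀ n ∈ Finset.range T, (vecMulVec (y n) (y n)).trace ≤ L ^ 2 := by
    intro n hn
    have hn' : n < T := Finset.mem_range.mp hn
    have : (vecMulVec (y n) (y n)).trace = ∑ i, y n i ^ 2 := by
      simp [Matrix.trace, Matrix.diag, vecMulVec_apply, sq]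
    rw [this]
    have hnn : 0 ≤ ∑ i, y n i ^ 2 := Finset.sum_nonneg fun i _ => sq_nonneg _
    have := hx ⟨n, hn'⟩
    have h2 : Real.sqrt (∑ i, y n i ^ 2) ≤ L := by
      simpa only [hy, dif_pos hn'] using this
    calc ∑ i, y n i ^ 2 = Real.sqrt (∑ i, y n i ^ 2) ^ 2 := (Real.sq_sqrt hnn).symm
      _ ≤ L ^ 2 := pow_le_pow_left₀ (Real.sqrt_nonneg _) h2 2
  have htrace : (U T).trace ≤ d * lam + T * L ^ 2 := by
    rw [hU]
    simp only [Matrix.trace_add, Matrix.trace_smul, Matrix.trace_one, Matrix.trace_sum]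
    have : (∑ n ∈ Finset.range T, (vecMulVec (y n) (y n)).trace) ≤ T * L ^ 2 := by
      calc (∑ n ∈ Finset.range T, (vecMulVec (y n) (y n)).trace)
          ≤ ∑ n ∈ Finset.range T, L ^ 2 := Finset.sum_le_sum hquad
        _ = T * L ^ 2 := by rw [Finset.sum_const, Finset.card_range, nsmul_eq_mul]
    simp only [Fintype.card_fin, smul_eq_mul]
    linarith
  -- determinant bound
  have hd0 : (0:ℝ) < d := Nat.cast_pos.mpr hd
  set C : ℝ := (d * lam + T * L ^ 2) / d with hC
  have hCpos : 0 < C := by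
    have : (0:ℝ) < d * lam + T * L ^ 2 := by positivity
    positivity
  have hdetle : (U T).det ≤ C ^ d := by
    refine (det_le_trace_div_pow hd (hUpos T).posSemidef).trans ?_
    have htrnn : 0 ≤ (U T).trace := by
      have h := trace_eq_sum_eigs (hUpos T).posSemidef.1
      rw [h]
      exact Finset.sum_nonneg fun i _ => (hUpos T).posSemidef.eigenvalues_nonneg i
    refine pow_le_pow_left₀ (div_nonneg htrnn hd0.le) ?_ d
    rw [hC]
    gcongr
  have hdetpos : 0 < (U T).det := (hUpos T).det_pos
  -- conclude with logs
  have hprodpos : 0 < ∏ n ∈ Finset.range T, (1 + s n) :=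
    Finset.prod_pos fun n _ => h1s n
  have hlogprod : Real.log (∏ n ∈ Finset.range T, (1 + s n))
      = Real.log ((U T).det) - d * Real.log lam := by
    have : (∏ n ∈ Finset.range T, (1 + s n)) = (U T).det / lam ^ d := by
      rw [htel T]; field_simp
    rw [this, Real.log_div hdetpos.ne' (by positivity), Real.log_pow]
  have hlogdet : Real.log ((U T).det) ≤ d * Real.log C := by
    calc Real.log ((U T).det) ≤ Real.log (C ^ d) :=
          Real.log_le_log hdetpos hdetle
      _ = d * Real.log C := by rw [Real.log_pow]
  have hfinal : Real.log C - Real.log lam = Real.log ((d * lam + T * L ^ 2) / (d * lam)) := by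
    rw [hC]
    have h2 : (0:ℝ) < d * lam + T * L ^ 2 := by positivity
    rw [Real.log_div h2.ne' hd0.ne', Real.log_div h2.ne' (by positivity),
      Real.log_mul hd0.ne' hlam.ne']
    ring
  rw [hlogprod]
  have : Real.log ((U T).det) - d * Real.log lam ≤ d * (Real.log C - Real.log lam) := by
    linarith [hlogdet]
  calc 2 * (Real.log ((U T).det) - ↑d * Real.log lam)
      ≤ 2 * (d * (Real.log C - Real.log lam)) := by linarith
    _ = 2 * d * Real.log ((d * lam + T * L ^ 2) / (d * lam)) := by rw [← hfinal]; ring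
end

section
/- Consider probability measures {P_θ : θ ∈ Θ} on a finite space Ω with |Θ| ≥ 2, and any estimator θ̂ : Ω → Θ, and any comparison distribution P_0 on Ω. Then (1/|Θ|)·Σ_{θ∈Θ} P_θ[θ̂ ≠ θ] ≥ 1 − (log 2 + (1/|Θ|)·Σ_{θ∈Θ} KL(P_θ || P_0)) / log|Θ|. -/
open Finset

theorem log_sum_ineq {ι : Type*} (s : Finset ι) (a b : ι → ℝ)
    (ha : ∀ i ∈ s, 0 ≤ a i) (hb : ∀ i ∈ s, 0 ≤ b i)
    (hab : ∀ i ∈ s, b i = 0 → a i = 0) :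
    (∑ i ∈ s, a i) * Real.log ((∑ i ∈ s, a i) / (∑ i ∈ s, b i)) ≤
      ∑ i ∈ s, a i * Real.log (a i / b i) := by
  classical
  set t := s.filter (fun i => b i ≠ 0) with ht
  have hsub : t ⊆ s := filter_subset _ _
  have hbpos : ∀ i ∈ t, 0 < b i := by
    intro i hi
    rw [ht, mem_filter] at hi
    exact lt_of_le_of_ne (hb i hi.1) (Ne.symm hi.2)
  have hA : ∑ i ∈ s, a i = ∑ i ∈ t, a i := by
    refine (Finset.sum_subset hsub ?_).symm
    intro i hi hni
    rw [ht, mem_filter] at hni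
    push_neg at hni
    exact hab i hi (hni hi)
  have hB : ∑ i ∈ s, b i = ∑ i ∈ t, b i := by
    refine (Finset.sum_subset hsub ?_).symm
    intro i hi hni
    rw [ht, mem_filter] at hni
    push_neg at hni
    exact hni hi
  have hR : ∑ i ∈ s, a i * Real.log (a i / b i) = ∑ i ∈ t, a i * Real.log (a i / b i) := by
    refine (Finset.sum_subset hsub ?_).symm
    intro i hi hni
    rw [ht, mem_filter] at hni
    push_neg at hni
    rw [hab i hi (hni hi), zero_mul]
  rw [hA, hB, hR]
  rcases eq_or_ne t ∅ with hte | hte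
  · simp [hte]
  have hBpos : 0 < ∑ i ∈ t, b i := by
    refine Finset.sum_pos hbpos (nonempty_of_ne_empty hte)
  have hJ := Real.convexOn_mul_log.map_centerMass_le (t := t) (w := b)
      (p := fun i => a i / b i) (fun i hi => (hbpos i hi).le) hBpos
      (fun i hi => Set.mem_Ici.2 (div_nonneg (ha i (hsub hi)) (hbpos i hi).le))
  have hcm : t.centerMass b (fun i => a i / b i) = (∑ i ∈ t, a i) / (∑ i ∈ t, b i) := by
    rw [Finset.centerMass, div_eq_inv_mul, smul_eq_mul]
    congr 1
    refine Finset.sum_congr rfl (fun i hi => ?_)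
    rw [smul_eq_mul, mul_div_cancel₀ _ (hbpos i hi).ne']
  have hcm2 : t.centerMass b ((fun x => x * Real.log x) ∘ fun i => a i / b i)
      = (∑ i ∈ t, b i)⁻¹ * ∑ i ∈ t, a i * Real.log (a i / b i) := by
    rw [Finset.centerMass, smul_eq_mul]
    congr 1
    refine Finset.sum_congr rfl (fun i hi => ?_)
    simp only [Function.comp, smul_eq_mul]
    rw [← mul_assoc, mul_div_cancel₀ _ (hbpos i hi).ne']
  rw [hcm, hcm2] at hJ
  set A := ∑ i ∈ t, a i
  set B := ∑ i ∈ t, b i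
  calc A * Real.log (A / B) = B * ((A / B) * Real.log (A / B)) := by
        rw [← mul_assoc, mul_div_assoc', mul_comm B A, mul_div_assoc, div_self hBpos.ne', mul_one]
    _ ≤ B * (B⁻¹ * ∑ i ∈ t, a i * Real.log (a i / b i)) := by
        exact mul_le_mul_of_nonneg_left hJ hBpos.le
    _ = ∑ i ∈ t, a i * Real.log (a i / b i) := by rw [← mul_assoc, mul_inv_cancel₀ hBpos.ne', one_mul]

theorem fano_key_ineq (N S : ℝ) (hN : 2 ≤ N) (hS0 : 0 ≤ S) (hSN : S ≤ N) :
    S * Real.log N - N * Real.log 2 ≤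
      S * Real.log S + (N - S) * Real.log ((N - S) / (N - 1)) := by
  have hN0 : (0:ℝ) < N := by linarith
  have hN1 : (0:ℝ) < N - 1 := by linarith
  set s := S / N with hs
  have hs0 : 0 ≤ s := div_nonneg hS0 hN0.le
  have hs1 : s ≤ 1 := (div_le_one hN0).2 hSN
  have e1 : S * Real.log S = S * Real.log N + N * (s * Real.log s) := by
    rcases eq_or_ne S 0 with h | h
    · simp [h, hs]
    · have hsne : s ≠ 0 := by
        rw [hs]; exact div_ne_zero h hN0.ne'
      have : Real.log S = Real.log N + Real.log s := by
        rw [← Real.log_mul hN0.ne' hsne, hs, mul_div_cancel₀ _ hN0.ne']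
      rw [this, hs]
      field_simp
  have e2 : (N - S) * Real.log ((N - S) / (N - 1)) =
      N * ((1 - s) * Real.log (1 - s)) + (N - S) * Real.log (N / (N - 1)) := by
    have h1s : 1 - s = (N - S) / N := by rw [hs]; field_simp
    rcases eq_or_ne S N with h | h
    · simp [h, h1s]
    have hNS : N - S ≠ 0 := sub_ne_zero.2 (Ne.symm h)
    have hfac : (N - S) / (N - 1) = (1 - s) * (N / (N - 1)) := by
      rw [h1s, div_mul_div_comm, mul_comm (N - S) N, mul_div_mul_left _ _ hN0.ne']
    rw [hfac, Real.log_mul (by rw [h1s]; exact div_ne_zero hNS hN0.ne')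
      (ne_of_gt (div_pos hN0 hN1)), h1s]
    field_simp
  rw [e1, e2]
  have hbin : -Real.log 2 ≤ s * Real.log s + (1 - s) * Real.log (1 - s) := by
    have h := Real.binEntropy_le_log_two (p := s)
    rw [Real.binEntropy, Real.log_inv, Real.log_inv] at h
    linarith
  have hlog2 : 0 ≤ Real.log (N / (N - 1)) :=
    Real.log_nonneg ((one_le_div hN1).2 (by linarith))
  nlinarith [mul_nonneg (sub_nonneg.2 hSN) hlog2, mul_le_mul_of_nonneg_left hbin hN0.le]

/-- Fano's inequality with an arbitrary comparison law `P₀`: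
`(1/|Θ|) ∑_θ P_θ[θ̂ ≠ θ] ≥ 1 - (log 2 + (1/|Θ|) ∑_θ KL(P_θ ‖ P₀)) / log |Θ|`. -/
theorem fano_inequality {Ω Θ : Type*} [Fintype Ω] [Fintype Θ] [DecidableEq Θ]
    (hΘ : 2 ≤ Fintype.card Θ)
    (P : Θ → Ω → ℝ) (P0 : Ω → ℝ)
    (hP_nonneg : ∀ θ ω, 0 ≤ P θ ω) (hP_sum : ∀ θ, ∑ ω, P θ ω = 1)
    (hP0_pos : ∀ ω, 0 < P0 ω) (hP0_sum : ∑ ω, P0 ω = 1)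
    (est : Ω → Θ) :
    1 - (Real.log 2 +
          (1 / (Fintype.card Θ : ℝ)) *
            ∑ θ, ∑ ω, P θ ω * Real.log (P θ ω / P0 ω)) / Real.log (Fintype.card Θ) ≤
      (1 / (Fintype.card Θ : ℝ)) *
        ∑ θ, ∑ ω ∈ univ.filter (fun ω => est ω ≠ θ), P θ ω := by
  classical
  set N : ℝ := (Fintype.card Θ : ℝ) with hNdef
  have hN : (2:ℝ) ≤ N := by rw [hNdef]; exact_mod_cast hΘ
  have hN0 : (0:ℝ) < N := by linarith
  have hlogN : 0 < Real.log N := Real.log_pos (by linarith)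
  set a : Θ → ℝ := fun θ => ∑ ω ∈ univ.filter (fun ω => est ω = θ), P θ ω with hadef
  set b : Θ → ℝ := fun θ => ∑ ω ∈ univ.filter (fun ω => est ω = θ), P0 ω with hbdef
  -- splitting lemma
  have hsplit : ∀ (f : Ω → ℝ) (θ : Θ),
      (∑ ω ∈ univ.filter (fun ω => est ω = θ), f ω) +
        (∑ ω ∈ univ.filter (fun ω => est ω ≠ θ), f ω) = ∑ ω, f ω := by
    intro f θ
    simpa using Finset.sum_filter_add_sum_filter_not univ (fun ω => est ω = θ) f
  have herr : ∀ θ, (∑ ω ∈ univ.filter (fun ω => est ω ≠ θ), P θ ω) = 1 - a θ := by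
    intro θ
    have := hsplit (P θ) θ
    rw [hP_sum θ] at this
    simp only [hadef]
    linarith
  have herr0 : ∀ θ, (∑ ω ∈ univ.filter (fun ω => est ω ≠ θ), P0 ω) = 1 - b θ := by
    intro θ
    have := hsplit P0 θ
    rw [hP0_sum] at this
    simp only [hbdef]
    linarith
  have ha_nonneg : ∀ θ, 0 ≤ a θ := fun θ =>
    Finset.sum_nonneg fun ω _ => hP_nonneg θ ω
  have ha_le_one : ∀ θ, a θ ≤ 1 := by
    intro θ
    have := herr θ
    have h2 : 0 ≤ ∑ ω ∈ univ.filter (fun ω => est ω ≠ θ), P θ ω :=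
      Finset.sum_nonneg fun ω _ => hP_nonneg θ ω
    linarith
  have hb_nonneg : ∀ θ, 0 ≤ b θ := fun θ =>
    Finset.sum_nonneg fun ω _ => (hP0_pos ω).le
  have hb_le_one : ∀ θ, b θ ≤ 1 := by
    intro θ
    have := herr0 θ
    have h2 : 0 ≤ ∑ ω ∈ univ.filter (fun ω => est ω ≠ θ), P0 ω :=
      Finset.sum_nonneg fun ω _ => (hP0_pos ω).le
    linarith
  have hb_sum : ∑ θ, b θ = 1 := by
    simp only [hbdef]
    rw [Finset.sum_fiberwise_of_maps_to (fun x _ => mem_univ (est x)) P0]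
    exact hP0_sum
  -- per-θ data processing
  have step1 : ∀ θ, a θ * Real.log (a θ / b θ) +
      (1 - a θ) * Real.log ((1 - a θ) / (1 - b θ)) ≤
      ∑ ω, P θ ω * Real.log (P θ ω / P0 ω) := by
    intro θ
    have h1 := log_sum_ineq (univ.filter (fun ω => est ω = θ)) (P θ) P0
      (fun ω _ => hP_nonneg θ ω) (fun ω _ => (hP0_pos ω).le)
      (fun ω _ h => absurd h (hP0_pos ω).ne')
    have h2 := log_sum_ineq (univ.filter (fun ω => est ω ≠ θ)) (P θ) P0
      (fun ω _ => hP_nonneg θ ω) (fun ω _ => (hP0_pos ω).le)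
      (fun ω _ h => absurd h (hP0_pos ω).ne')
    rw [herr θ, herr0 θ] at h2
    have hsum := hsplit (fun ω => P θ ω * Real.log (P θ ω / P0 ω)) θ
    simp only [hadef, hbdef] at h1 ⊢
    linarith
  set K : ℝ := ∑ θ, ∑ ω, P θ ω * Real.log (P θ ω / P0 ω) with hKdef
  set S : ℝ := ∑ θ, a θ with hSdef
  have hS0 : 0 ≤ S := Finset.sum_nonneg fun θ _ => ha_nonneg θ
  have hSN : S ≤ N := by
    rw [hSdef, hNdef]
    calc ∑ θ, a θ ≤ ∑ θ : Θ, (1:ℝ) := Finset.sum_le_sum fun θ _ => ha_le_one θ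
      _ = (Fintype.card Θ : ℝ) := by simp [Finset.card_univ]
  -- zero conditions
  have hb0 : ∀ θ, b θ = 0 → a θ = 0 := by
    intro θ h
    have hz := (Finset.sum_eq_zero_iff_of_nonneg (fun ω _ => (hP0_pos ω).le)).1 h
    exact Finset.sum_eq_zero fun ω hω => absurd (hz ω hω) (hP0_pos ω).ne'
  have hb1 : ∀ θ, 1 - b θ = 0 → 1 - a θ = 0 := by
    intro θ h
    have h' : ∑ ω ∈ univ.filter (fun ω => est ω ≠ θ), P0 ω = 0 := by
      rw [herr0 θ]; linarith
    have hz := (Finset.sum_eq_zero_iff_of_nonneg (fun ω _ => (hP0_pos ω).le)).1 h'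
    rw [← herr θ]
    exact Finset.sum_eq_zero fun ω hω => absurd (hz ω hω) (hP0_pos ω).ne'
  -- sum over θ
  have step2 : S * Real.log S ≤ ∑ θ, a θ * Real.log (a θ / b θ) := by
    have := log_sum_ineq univ a b (fun θ _ => ha_nonneg θ)
      (fun θ _ => hb_nonneg θ) (fun θ _ => hb0 θ)
    rwa [hb_sum, div_one] at this
  have step3 : (N - S) * Real.log ((N - S) / (N - 1)) ≤
      ∑ θ, (1 - a θ) * Real.log ((1 - a θ) / (1 - b θ)) := by
    have h := log_sum_ineq univ (fun θ => 1 - a θ) (fun θ => 1 - b θ)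
      (fun θ _ => by show (0:ℝ) ≤ 1 - a θ; linarith [ha_le_one θ])
      (fun θ _ => by show (0:ℝ) ≤ 1 - b θ; linarith [hb_le_one θ])
      (fun θ _ => hb1 θ)
    have hsa : ∑ θ : Θ, (1 - a θ) = N - S := by
      rw [Finset.sum_sub_distrib]
      simp [hNdef, hSdef, Finset.card_univ]
    have hsb : ∑ θ : Θ, (1 - b θ) = N - 1 := by
      rw [Finset.sum_sub_distrib, hb_sum]
      simp [hNdef, Finset.card_univ]
    rwa [hsa, hsb] at h
  have hK : S * Real.log N - N * Real.log 2 ≤ K := by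
    have h1 : ∑ θ, (a θ * Real.log (a θ / b θ) +
        (1 - a θ) * Real.log ((1 - a θ) / (1 - b θ))) ≤ K := by
      rw [hKdef]
      exact Finset.sum_le_sum fun θ _ => step1 θ
    rw [Finset.sum_add_distrib] at h1
    have := fano_key_ineq N S hN hS0 hSN
    linarith
  -- finish
  have hE : ∑ θ, ∑ ω ∈ univ.filter (fun ω => est ω ≠ θ), P θ ω = N - S := by
    rw [Finset.sum_congr rfl fun θ _ => herr θ, Finset.sum_sub_distrib]
    simp [hNdef, hSdef, Finset.card_univ]
  rw [hE]
  have hfinal : S / N ≤ (Real.log 2 + (1 / N) * K) / Real.log N := by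
    rw [div_le_div_iff₀ hN0 hlogN]
    have hexp : (Real.log 2 + (1 / N) * K) * N = N * Real.log 2 + K := by
      field_simp
    rw [hexp]
    linarith
  have hrhs : (1 / N) * (N - S) = 1 - S / N := by
    field_simp
  rw [hrhs]
  linarith
end

section
/- Let U_{1,1} = λI ∈ R^{d×d} and suppose for each k in a set K ⊆ [K_total] we have det(U_{1,k+1}) > 2·det(U_{1,k}), while U_{1,k+1} ⪰ U_{1,k} always (so det is nondecreasing). If ||U_{1,K_total+1}||_2 ≤ λ + K_total·H·L², then |K| ≤ 2d·log(1 + H·K_total·L²/λ). -/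
open Matrix

/-- Counting episodes where the determinant doubles: if `U 0 = λ I`, the determinants are
nondecreasing, the final matrix satisfies `U K_total ⪯ (λ + K_total H L²) I`, and on the set
`Kset` the determinant more than doubles, then `|Kset| ≤ 2 d log(1 + H K_total L²/λ)`. -/
theorem det_doubling_count (d Ktot H : ℕ) (hd : 0 < d) (hKtot : 0 < Ktot) (hH : 0 < H)
    (lam L : ℝ) (hlam : 0 < lam) (hL : 0 < L)
    (U : ℕ → Matrix (Fin d) (Fin d) ℝ)
    (hU0 : U 0 = lam • (1 : Matrix (Fin d) (Fin d) ℝ))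
    (hpos : ∀ k, (U k).PosDef)
    (hmono : ∀ k, (U k).det ≤ (U (k + 1)).det)
    (Kset : Finset ℕ) (hKset : Kset ⊆ Finset.range Ktot)
    (hdouble : ∀ k ∈ Kset, 2 * (U k).det < (U (k + 1)).det)
    (hbound : ((lam + (Ktot : ℝ) * H * L ^ 2) • (1 : Matrix (Fin d) (Fin d) ℝ)
        - U Ktot).PosSemidef) :
    (Kset.card : ℝ) ≤ 2 * d * Real.log (1 + (H : ℝ) * Ktot * L ^ 2 / lam) := by
  set c : ℝ := lam + (Ktot : ℝ) * H * L ^ 2 with hc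
  have hc0 : 0 < c := by positivity
  have hlamc : lam ≤ c := by
    have : 0 ≤ (Ktot : ℝ) * H * L ^ 2 := by positivity
    linarith
  -- det U 0 = lam ^ d
  have hdet0 : (U 0).det = lam ^ d := by
    rw [hU0, Matrix.det_smul, Matrix.det_one, mul_one, Fintype.card_fin]
  -- determinant lower bound by doubling
  have key : ∀ n, (2 : ℝ) ^ (Kset ∩ Finset.range n).card * lam ^ d ≤ (U n).det := by
    intro n
    induction n with
    | zero => simp [hdet0]
    | succ n ih =>
      have hsplit : Kset ∩ Finset.range (n + 1)
          = if n ∈ Kset then insert n (Kset ∩ Finset.range n) else Kset ∩ Finset.range n := by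
        rw [Finset.range_add_one]
        by_cases hn : n ∈ Kset <;> simp [hn, Finset.inter_insert_of_mem,
          Finset.inter_insert_of_notMem]
      by_cases hn : n ∈ Kset
      · have hcard : (Kset ∩ Finset.range (n + 1)).card = (Kset ∩ Finset.range n).card + 1 := by
          rw [hsplit, if_pos hn, Finset.card_insert_of_notMem (by simp)]
        rw [hcard, pow_succ]
        have h2 := hdouble n hn
        calc (2 : ℝ) ^ (Kset ∩ Finset.range n).card * 2 * lam ^ d
            = 2 * ((2 : ℝ) ^ (Kset ∩ Finset.range n).card * lam ^ d) := by ring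
          _ ≤ 2 * (U n).det := by linarith
          _ ≤ (U (n + 1)).det := le_of_lt h2
      · have hcard : (Kset ∩ Finset.range (n + 1)).card = (Kset ∩ Finset.range n).card := by
          rw [hsplit, if_neg hn]
        rw [hcard]
        exact ih.trans (hmono n)
  have keyK : (2 : ℝ) ^ Kset.card * lam ^ d ≤ (U Ktot).det := by
    have := key Ktot
    rwa [Finset.inter_eq_left.mpr hKset] at this
  -- upper bound on det (U Ktot)
  have hA : (U Ktot).IsHermitian := (hpos Ktot).isHermitian
  have heig : ∀ i, hA.eigenvalues i ≤ c := by
    intro i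
    have hv := hA.mulVec_eigenvectorBasis i
    set v : Fin d → ℝ := ⇑(hA.eigenvectorBasis i) with hvdef
    have hunit : dotProduct (star v) v = 1 := by
      have hnorm := hA.eigenvectorBasis.orthonormal.1 i
      have h2 : dotProduct (star v) v = ‖hA.eigenvectorBasis i‖ ^ 2 := by
        rw [EuclideanSpace.norm_eq, Real.sq_sqrt (by positivity)]
        simp [dotProduct, hvdef, sq]
      rw [h2, hnorm]; norm_num
    have hpsd := hbound.dotProduct_mulVec_nonneg v
    have hform : star v ⬝ᵥ ((c • (1 : Matrix (Fin d) (Fin d) ℝ) - U Ktot) *ᵥ v)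
        = c - hA.eigenvalues i := by
      rw [Matrix.sub_mulVec, dotProduct_sub, hv, Matrix.smul_mulVec,
        Matrix.one_mulVec, dotProduct_smul, dotProduct_smul, hunit]
      simp
    rw [hform] at hpsd
    linarith
  have hdetub : (U Ktot).det ≤ c ^ d := by
    rw [hA.det_eq_prod_eigenvalues]
    calc (∏ i, (hA.eigenvalues i : ℝ)) ≤ ∏ _i : Fin d, c := by
          apply Finset.prod_le_prod
          · intro i _; exact le_of_lt ((hpos Ktot).eigenvalues_pos i)
          · intro i _; exact heig i
      _ = c ^ d := by simp
  -- combine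
  have hpow : (2 : ℝ) ^ Kset.card ≤ (c / lam) ^ d := by
    rw [div_pow]
    rw [le_div_iff₀ (by positivity)]
    linarith [keyK.trans hdetub]
  have hlog : (Kset.card : ℝ) * Real.log 2 ≤ (d : ℝ) * Real.log (c / lam) := by
    have := Real.log_le_log (by positivity) hpow
    rwa [Real.log_pow, Real.log_pow] at this
  have hlog2 : (1 : ℝ) / 2 ≤ Real.log 2 := by
    have := Real.log_two_gt_d9
    linarith
  have hratio : c / lam = 1 + (H : ℝ) * Ktot * L ^ 2 / lam := by
    field_simp [hc]; ring
  have hlognn : 0 ≤ Real.log (c / lam) := by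
    apply Real.log_nonneg
    rw [le_div_iff₀ hlam]; linarith
  calc (Kset.card : ℝ) ≤ 2 * ((Kset.card : ℝ) * Real.log 2) := by nlinarith [Nat.cast_nonneg (α := ℝ) Kset.card]
    _ ≤ 2 * ((d : ℝ) * Real.log (c / lam)) := by linarith
    _ = 2 * d * Real.log (1 + (H : ℝ) * Ktot * L ^ 2 / lam) := by rw [hratio]; ring
end
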